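/- arXiv:2109.05587 — 3 statements merged into one kernel-verified Lean document; each statement's English description precedes it below -/
import Mathlib

section
/- For the binary asymmetric channel with correct-transmission probabilities P₀, P₁ satisfying P₀ + P₁ > 1, the function f(α) = H_b(αP₁ + (1-α)(1-P₀)) - (1-α)H_b(P₀) - αH_b(P₁) on [0,1] attains its maximum at α* = (1/(P₀+P₁-1))·(1/(2^K + 1) - (1-P₀)), where K = (H_b(P₁) - H_b(P₀))/(P₀+P₁-1). -/
open Real

/-- Binary entropy function (base 2). -/
noncomputable def H2 (x : ℝ) : ℝ :=
  -(x * Real.logb 2 x) - (1 - x) * Real.logb 2 (1 - x)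

/-- Mutual information of the binary asymmetric channel with correct-transmission
probabilities `P₀, P₁`, as a function of the input probability `α` of symbol `1`. -/
noncomputable def bacMI (P₀ P₁ α : ℝ) : ℝ :=
  H2 (α * P₁ + (1 - α) * (1 - P₀)) - (1 - α) * H2 P₀ - α * H2 P₁

/-!
Writing `H_b(P₁) - H_b(P₀) = K (P₀ + P₁ - 1)`, the mutual information becomes
`H_b(y) + K (1 - y)` plus a constant, where `y = α P₁ + (1 - α)(1 - P₀)` is the output
probability of `1`. By concavity of `log` (Gibbs' inequality), `H_b(y) + K (1 - y)` is at most
`log₂ (1 + 2^K)`, with equality at `y = 1 / (2^K + 1)`, which is the output probability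
produced by `α*`.
-/

lemma H2_add_mul_one_sub_le_logb (K : ℝ) {x : ℝ} (hx : x ∈ Set.Ioo (0 : ℝ) 1) :
    H2 x + K * (1 - x) ≤ logb 2 (1 + 2 ^ K) := by
  obtain ⟨hx0, hx1⟩ := hx
  have h1x : 0 < 1 - x := sub_pos.2 hx1
  have h2K : (0 : ℝ) < 2 ^ K := rpow_pos_of_pos two_pos K
  -- Jensen for `log` at the points `1 / x` and `2^K / (1 - x)` with weights `x` and `1 - x`.
  have jensen := strictConcaveOn_log_Ioi.concaveOn.2 (Set.mem_Ioi.2 (one_div_pos.2 hx0))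
    (Set.mem_Ioi.2 (div_pos h2K h1x)) hx0.le h1x.le (add_sub_cancel x 1)
  have hmean : x • (1 / x) + (1 - x) • (2 ^ K / (1 - x)) = (1 + 2 ^ K : ℝ) := by
    simp only [smul_eq_mul]
    field_simp
  rw [hmean, smul_eq_mul, smul_eq_mul, one_div, log_inv, log_div h2K.ne' h1x.ne',
    log_rpow two_pos] at jensen
  rw [H2, logb, logb, logb, le_div_iff₀ (log_pos one_lt_two)]
  calc (-(x * (log x / log 2)) - (1 - x) * (log (1 - x) / log 2) + K * (1 - x)) * log 2
      = x * -log x + (1 - x) * (K * log 2 - log (1 - x)) := by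
        field_simp
        ring
    _ ≤ log (1 + 2 ^ K) := jensen

lemma H2_add_mul_one_sub_eq_logb (K : ℝ) :
    H2 (1 / (2 ^ K + 1)) + K * (1 - 1 / (2 ^ K + 1)) = logb 2 (1 + 2 ^ K) := by
  have h2K : (0 : ℝ) < 2 ^ K := rpow_pos_of_pos two_pos K
  have hcompl : 1 - 1 / (2 ^ K + 1) = (2 : ℝ) ^ K / (2 ^ K + 1) := by
    field_simp
    ring
  have hlog2 : log 2 ≠ 0 := (log_pos one_lt_two).ne'
  rw [H2, hcompl, logb, logb, logb, one_div, log_inv, log_div h2K.ne' (by positivity),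
    log_rpow two_pos, add_comm (1 : ℝ)]
  field_simp
  ring

lemma bacMI_eq_H2_add_mul_one_sub {P₀ P₁ K : ℝ} (hK : H2 P₁ - H2 P₀ = K * (P₀ + P₁ - 1))
    (α : ℝ) :
    bacMI P₀ P₁ α = H2 (α * P₁ + (1 - α) * (1 - P₀))
      + K * (1 - (α * P₁ + (1 - α) * (1 - P₀))) - (K * P₀ + H2 P₀) := by
  rw [bacMI]
  linear_combination (-α) * hK

/-- The BAC mutual information `f(α)` on `[0,1]` attains its maximum at
`α* = (1/(P₀+P₁-1)) (1/(2^K+1) - (1-P₀))` where `K = (H_b(P₁)-H_b(P₀))/(P₀+P₁-1)`. -/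
theorem bac_argmax
    (P₀ P₁ : ℝ) (hP₀ : P₀ ∈ Set.Ioo (0 : ℝ) 1) (hP₁ : P₁ ∈ Set.Ioo (0 : ℝ) 1)
    (hsum : 1 < P₀ + P₁)
    (K : ℝ) (hK : K = (H2 P₁ - H2 P₀) / (P₀ + P₁ - 1))
    (αstar : ℝ)
    (hαstar : αstar = (1 / (P₀ + P₁ - 1)) * (1 / ((2 : ℝ) ^ K + 1) - (1 - P₀))) :
    ∀ α ∈ Set.Icc (0 : ℝ) 1, bacMI P₀ P₁ α ≤ bacMI P₀ P₁ αstar := by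
  intro α ⟨hα0, hα1⟩
  have hs : P₀ + P₁ - 1 ≠ 0 := by linarith
  have hKs : H2 P₁ - H2 P₀ = K * (P₀ + P₁ - 1) := by
    rw [hK]
    field_simp
  have hout_star : αstar * P₁ + (1 - αstar) * (1 - P₀) = 1 / (2 ^ K + 1) := by
    rw [hαstar]
    field_simp
    ring
  have h1P₀ : 1 - P₀ ∈ Set.Ioo (0 : ℝ) 1 := ⟨by linarith [hP₀.2], by linarith [hP₀.1]⟩
  have hout : α * P₁ + (1 - α) * (1 - P₀) ∈ Set.Ioo (0 : ℝ) 1 :=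
    convex_Ioo (0 : ℝ) 1 hP₁ h1P₀ hα0 (sub_nonneg.2 hα1) (add_sub_cancel α 1)
  rw [bacMI_eq_H2_add_mul_one_sub hKs, bacMI_eq_H2_add_mul_one_sub hKs, hout_star,
    H2_add_mul_one_sub_eq_logb]
  linarith [H2_add_mul_one_sub_le_logb K hout]
end

section
/- The capacity of the binary asymmetric channel with correct-transmission probabilities P₀, P₁ (P₀ + P₁ > 1) equals log₂(1 + 2^K) - P₀·K - H_b(P₀), where K = (H_b(P₁) - H_b(P₀))/(P₀+P₁-1). -/
open Real

/-!
With `q = α P₁ + (1 - α) (1 - P₀)` the probability of output `1`, and since `H2 P₀ = H2 (1 - P₀)`,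
`K` is the slope of the chord of `H2` over `[1 - P₀, P₁]`, so the mutual information is
`H2 q + (1 - q) K - P₀ K - H2 P₀`. By the mean value theorem `K = logb 2 ((1 - c) / c)` is the
derivative of `H2` at some `c` in between, and by concavity the tangent to `H2` at `c` lies above
`H2`, so `q = c` maximises. There `2 ^ K = (1 - c) / c`, and `H2 c + (1 - c) K`, the height of
that tangent at `1`, equals `-logb 2 c = logb 2 (1 + 2 ^ K)`.
-/

theorem ConcaveOn.le_add_mul_sub_of_hasDerivAt {S : Set ℝ} {f : ℝ → ℝ} {f' x y : ℝ}
    (hf : ConcaveOn ℝ S f) (hx : x ∈ S) (hy : y ∈ S) (hd : HasDerivAt f f' x) :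
    f y ≤ f x + f' * (y - x) := by
  rcases lt_trichotomy y x with hyx | rfl | hxy
  · have h := hf.le_slope_of_hasDerivAt hy hx hyx hd
    rw [slope_def_field, le_div_iff₀ (sub_pos.mpr hyx)] at h
    linarith
  · simp
  · have h := hf.slope_le_of_hasDerivAt hx hy hxy hd
    rw [slope_def_field, div_le_iff₀ (sub_pos.mpr hxy)] at h
    linarith

theorem H2_eq_binEntropy_div_log_two (x : ℝ) : H2 x = binEntropy x / log 2 := by
  simp only [H2, binEntropy, logb, log_inv]
  ring

theorem H2_one_sub (x : ℝ) : H2 (1 - x) = H2 x := by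
  simp only [H2_eq_binEntropy_div_log_two, binEntropy_one_sub]

theorem continuous_H2 : Continuous H2 := by
  simp only [funext H2_eq_binEntropy_div_log_two]
  fun_prop

theorem concaveOn_H2 : ConcaveOn ℝ (Set.Icc 0 1) H2 := by
  simpa only [funext H2_eq_binEntropy_div_log_two, div_eq_inv_mul, smul_eq_mul] using
    strictConcave_binEntropy.concaveOn.smul (inv_nonneg.mpr (log_nonneg one_le_two))

theorem hasDerivAt_H2 {x : ℝ} (hx₀ : x ≠ 0) (hx₁ : x ≠ 1) :
    HasDerivAt H2 (logb 2 (1 - x) - logb 2 x) x := by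
  simp only [funext H2_eq_binEntropy_div_log_two, logb, ← sub_div]
  exact (hasDerivAt_binEntropy hx₀ hx₁).div_const _

theorem H2_le_tangent {c q : ℝ} (hc : c ∈ Set.Ioo 0 1) (hq : q ∈ Set.Icc 0 1) :
    H2 q ≤ H2 c + (logb 2 (1 - c) - logb 2 c) * (q - c) :=
  concaveOn_H2.le_add_mul_sub_of_hasDerivAt (Set.Ioo_subset_Icc_self hc) hq
    (hasDerivAt_H2 hc.1.ne' hc.2.ne)

theorem H2_add_one_sub_mul_eq_logb {c K : ℝ} (hc : c ∈ Set.Ioo 0 1)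
    (hK : logb 2 (1 - c) - logb 2 c = K) :
    H2 c + (1 - c) * K = logb 2 (1 + 2 ^ K) := by
  obtain ⟨hc₀, hc₁⟩ := hc
  have h2K : (2 : ℝ) ^ K = (1 - c) / c := by
    rw [← hK, ← logb_div (sub_pos.mpr hc₁).ne' hc₀.ne',
      rpow_logb two_pos (by norm_num) (div_pos (sub_pos.mpr hc₁) hc₀)]
  have h1 : 1 + (2 : ℝ) ^ K = c⁻¹ := by
    rw [h2K]
    field_simp
    ring
  rw [h1, logb_inv, H2, ← hK]
  ring

theorem bacMI_eq_comp_lineMap {P₀ P₁ K : ℝ} (hK : H2 P₁ - H2 P₀ = (P₀ + P₁ - 1) * K) :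
    bacMI P₀ P₁ =
      (fun q ↦ H2 q + (1 - q) * K - P₀ * K - H2 P₀) ∘ AffineMap.lineMap (1 - P₀) P₁ := by
  ext α
  simp only [bacMI, Function.comp_apply, AffineMap.lineMap_apply_ring]
  rw [show (1 - α) * (1 - P₀) + α * P₁ = α * P₁ + (1 - α) * (1 - P₀) by ring]
  linear_combination (-α) * hK

/-- The capacity of the binary asymmetric channel (the maximum over `α ∈ [0,1]` of the
mutual information) equals `log₂(1+2^K) - P₀ K - H_b(P₀)` with
`K = (H_b(P₁)-H_b(P₀))/(P₀+P₁-1)`. -/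
theorem bac_capacity
    (P₀ P₁ : ℝ) (hP₀ : P₀ ∈ Set.Ioo (0 : ℝ) 1) (hP₁ : P₁ ∈ Set.Ioo (0 : ℝ) 1)
    (hsum : 1 < P₀ + P₁)
    (K : ℝ) (hK : K = (H2 P₁ - H2 P₀) / (P₀ + P₁ - 1)) :
    IsGreatest (bacMI P₀ P₁ '' Set.Icc 0 1)
      (Real.logb 2 (1 + (2 : ℝ) ^ K) - P₀ * K - H2 P₀) := by
  obtain ⟨hP₀0, hP₀1⟩ := hP₀
  obtain ⟨hP₁0, hP₁1⟩ := hP₁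
  have hlt : 1 - P₀ < P₁ := by linarith
  have hslope : H2 P₁ - H2 P₀ = (P₀ + P₁ - 1) * K := by
    rw [hK, mul_div_cancel₀ _ (by linarith)]
  obtain ⟨c, hc, hcK⟩ := exists_hasDerivAt_eq_slope H2 (fun x ↦ logb 2 (1 - x) - logb 2 x) hlt
    continuous_H2.continuousOn
    (fun x hx ↦ hasDerivAt_H2 (by linarith [hx.1]) (by linarith [hx.2]))
  rw [H2_one_sub, hslope, show P₁ - (1 - P₀) = P₀ + P₁ - 1 by ring,
    mul_div_cancel_left₀ _ (by linarith)] at hcK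
  have hc01 : c ∈ Set.Ioo 0 1 := ⟨by linarith [hc.1], by linarith [hc.2]⟩
  rw [bacMI_eq_comp_lineMap hslope, Set.image_comp, ← segment_eq_image_lineMap,
    segment_eq_Icc hlt.le, ← H2_add_one_sub_mul_eq_logb hc01 hcK]
  refine ⟨⟨c, Set.Ioo_subset_Icc_self hc, rfl⟩, ?_⟩
  rintro _ ⟨q, hq, rfl⟩
  have := H2_le_tangent hc01 (q := q) ⟨by linarith [hq.1], by linarith [hq.2]⟩
  rw [hcK] at this
  dsimp only
  linarith
end

section
/- The capacity of the Z-channel with correct-transmission probability P₁ ∈ (0,1) for input 1 (and input 0 always transmitted correctly) equals log₂(1 + 2^{-H_b(P₁)/P₁}). -/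
open Real

/-- Mutual information of the Z-channel (`W(0|0)=1`, `W(1|1)=P₁`) when the input is `1`
with probability `α`: `I = H(Y) - H(Y|X) = H_b(αP₁) - α H_b(P₁)`. -/
noncomputable def zMI (P₁ α : ℝ) : ℝ := H2 (α * P₁) - α * H2 P₁

/-!
By Gibbs' inequality `H_b(p)` is at most the cross entropy of `p` against any fixed law `q`,
an affine function of `p`. Take `p = αP₁` (the output law) and `q = (1 + 2^c)⁻¹` with
`c = H_b(P₁)/P₁`: the slope of the bound then cancels the term `α H_b(P₁)`, so
`I ≤ log₂(1 + 2^c) - c = log₂(1 + 2^{-c})` for every `α`, with equality at `p = q`.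
This `α = q/P₁` is admissible because `2^c ≥ 1/P₁`.
-/

noncomputable def crossH2 (p q : ℝ) : ℝ :=
  -(p * logb 2 q) - (1 - p) * logb 2 (1 - q)

lemma mul_log_sub_mul_log_le {p q : ℝ} (hp : 0 ≤ p) (hq : 0 < q) :
    p * log q - p * log p ≤ q - p := by
  rcases hp.eq_or_lt with rfl | hp
  · simpa using hq.le
  calc p * log q - p * log p = p * log (q / p) := by rw [log_div hq.ne' hp.ne']; ring
    _ ≤ p * (q / p - 1) := by gcongr; exact log_le_sub_one_of_pos (by positivity)
    _ = q - p := by field_simp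

lemma H2_le_crossH2 {p q : ℝ} (hp₀ : 0 ≤ p) (hp₁ : p ≤ 1) (hq₀ : 0 < q) (hq₁ : q < 1) :
    H2 p ≤ crossH2 p q := by
  have h₀ := mul_log_sub_mul_log_le hp₀ hq₀
  have h₁ := mul_log_sub_mul_log_le (sub_nonneg.2 hp₁) (sub_pos.2 hq₁)
  have hH2 : H2 p = (-(p * log p) - (1 - p) * log (1 - p)) / log 2 := by
    simp only [H2, logb]; ring
  have hcross : crossH2 p q = (-(p * log q) - (1 - p) * log (1 - q)) / log 2 := by
    simp only [crossH2, logb]; ring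
  rw [hH2, hcross]
  gcongr ?_ / _
  linarith

lemma crossH2_inv_one_add_rpow (p c : ℝ) :
    crossH2 p (1 + 2 ^ c)⁻¹ = logb 2 (1 + 2 ^ c) - (1 - p) * c := by
  have hpos : (0 : ℝ) < 2 ^ c := by positivity
  have hcompl : 1 - (1 + (2 : ℝ) ^ c)⁻¹ = 2 ^ c / (1 + 2 ^ c) := by field_simp; ring
  rw [crossH2, logb_inv, hcompl, logb_div hpos.ne' (by positivity),
    logb_rpow two_pos (by norm_num)]
  ring

lemma logb_one_add_rpow_neg (c : ℝ) :
    logb 2 (1 + 2 ^ (-c)) = logb 2 (1 + 2 ^ c) - c := by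
  have hpos : (0 : ℝ) < 2 ^ c := by positivity
  have hquot : 1 + (2 : ℝ) ^ (-c) = (1 + 2 ^ c) / 2 ^ c := by
    rw [rpow_neg zero_le_two]; field_simp; ring
  rw [hquot, logb_div (by positivity) hpos.ne', logb_rpow two_pos (by norm_num)]

lemma inv_le_rpow_H2_div {P : ℝ} (hP₀ : 0 < P) (hP₁ : P < 1) : P⁻¹ ≤ 2 ^ (H2 P / P) := by
  have hcompl : (1 - P) * logb 2 (1 - P) ≤ 0 :=
    mul_nonpos_of_nonneg_of_nonpos (by linarith) (logb_nonpos one_lt_two (by linarith) (by linarith))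
  rw [← rpow_logb two_pos (by norm_num) (inv_pos.2 hP₀)]
  gcongr
  · norm_num
  rw [logb_inv, le_div_iff₀ hP₀, H2]
  linarith

/-- The capacity of the Z-channel with correct-transmission probability `P₁ ∈ (0,1)` for
input `1` equals `log₂(1 + 2^{-H_b(P₁)/P₁})`. -/
theorem z_channel_capacity
    (P₁ : ℝ) (hP₁ : P₁ ∈ Set.Ioo (0 : ℝ) 1) :
    IsGreatest (zMI P₁ '' Set.Icc 0 1)
      (Real.logb 2 (1 + (2 : ℝ) ^ (-(H2 P₁) / P₁))) := by
  obtain ⟨hP₀, hP₁⟩ := hP₁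
  set c := H2 P₁ / P₁
  set q : ℝ := (1 + 2 ^ c)⁻¹
  have hq₀ : 0 < q := by positivity
  have hq₁ : q < 1 := inv_lt_one_of_one_lt₀ (by linarith [rpow_pos_of_pos two_pos c])
  have hqP : q ≤ P₁ := calc
    q ≤ (2 ^ c)⁻¹ := inv_anti₀ (by positivity) (by linarith)
    _ ≤ P₁⁻¹⁻¹ := inv_anti₀ (by positivity) (inv_le_rpow_H2_div hP₀ hP₁)
    _ = P₁ := inv_inv P₁
  have hbound (α : ℝ) :
      crossH2 (α * P₁) q - α * H2 P₁ = logb 2 (1 + 2 ^ (-(H2 P₁) / P₁)) := by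
    have hc : c * P₁ = H2 P₁ := div_mul_cancel₀ _ hP₀.ne'
    rw [crossH2_inv_one_add_rpow, neg_div, logb_one_add_rpow_neg]
    linear_combination α * hc
  refine ⟨⟨q / P₁, ⟨by positivity, (div_le_one hP₀).2 hqP⟩, ?_⟩, ?_⟩
  · rw [← hbound, zMI, div_mul_cancel₀ q hP₀.ne']
    rfl
  · rintro _ ⟨α, ⟨hα₀, hα₁⟩, rfl⟩
    rw [← hbound α]
    exact sub_le_sub_right (H2_le_crossH2 (by positivity) (by nlinarith) hq₀ hq₁) _
end
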